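/- Let B = [I_d; A] and B̃ = [I_d; Ã] be matrices in ℝ^{D×d} of the stated block form, and suppose ‖B − B̃‖ ≤ ε in spectral norm. Then the orthogonal projections onto their column spaces satisfy ‖B B⁺ − B̃ B̃⁺‖ ≤ ε. -/

import Mathlib

/-!
`P = B B⁺` and `Q = B̃ B̃⁺` are orthogonal projections. Splitting `x = (1 - Q) x + Q x` writes
`(P - Q) x` as the orthogonal difference `P (1 - Q) x - (1 - P) Q x`, so `‖P - Q‖` is at most
`max ‖(1 - Q) P‖ ‖(1 - P) Q‖`. Since `(1 - Q) B̃ = 0`, we have `(1 - Q) P = (1 - Q) (B - B̃) B⁺`,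
of norm at most `‖B - B̃‖ ‖B⁺‖`, and `‖B⁺‖ ≤ 1` because `B = [I; A]` satisfies `‖x‖ ≤ ‖B x‖`.
-/

open Matrix WithLp
open scoped Matrix.Norms.L2Operator

lemma norm_sub_sq_eq_norm_sq_add_norm_sq_of_inner_eq_zero {𝕜 F : Type*} [RCLike 𝕜]
    [NormedAddCommGroup F] [InnerProductSpace 𝕜 F] {x y : F} (h : inner 𝕜 x y = 0) :
    ‖x - y‖ ^ 2 = ‖x‖ ^ 2 + ‖y‖ ^ 2 := by
  have h' : inner 𝕜 x (-y) = 0 := by rw [inner_neg_right, h, neg_zero]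
  rw [sub_eq_add_neg, sq, sq, sq, norm_add_sq_eq_norm_sq_add_norm_sq_of_inner_eq_zero _ _ h',
    norm_neg]

namespace ContinuousLinearMap

variable {𝕜 E : Type*} [RCLike 𝕜] [NormedAddCommGroup E] [InnerProductSpace 𝕜 E]
  [CompleteSpace E]

lemma inner_apply_one_sub_apply_eq_zero {P : E →L[𝕜] E} (hP : IsStarProjection P) (x y : E) :
    inner 𝕜 (P x) ((1 - P) y) = 0 := by
  rw [← adjoint_inner_right, ← star_eq_adjoint, hP.isSelfAdjoint.star_eq, ← mul_apply_eq_comp,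
    hP.mul_one_sub_self, _root_.zero_apply, inner_zero_right]

theorem norm_sub_le_of_isStarProjection {P Q : E →L[𝕜] E} (hP : IsStarProjection P)
    (hQ : IsStarProjection Q) {c : ℝ} (hPQ : ‖(1 - Q) * P‖ ≤ c) (hQP : ‖(1 - P) * Q‖ ≤ c) :
    ‖P - Q‖ ≤ c := by
  have hc : 0 ≤ c := (norm_nonneg _).trans hPQ
  have hPQ' : ‖P * (1 - Q)‖ ≤ c := by
    rwa [← norm_star, star_mul, hP.isSelfAdjoint.star_eq, hQ.one_sub.isSelfAdjoint.star_eq]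
  refine opNorm_le_bound _ hc fun x => ?_
  set u := (1 - Q) x
  set v := Q x
  have hu : ‖P u‖ ≤ c * ‖u‖ := by
    have : P u = (P * (1 - Q)) u := by
      rw [mul_apply_eq_comp, ← mul_apply_eq_comp (1 - Q), hQ.one_sub.isIdempotentElem.eq]
    rw [this]
    exact (le_opNorm _ _).trans (mul_le_mul_of_nonneg_right hPQ' (norm_nonneg _))
  have hv : ‖(1 - P) v‖ ≤ c * ‖v‖ := by
    have : (1 - P) v = ((1 - P) * Q) v := by
      rw [mul_apply_eq_comp, ← mul_apply_eq_comp Q, hQ.isIdempotentElem.eq]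
    rw [this]
    exact (le_opNorm _ _).trans (mul_le_mul_of_nonneg_right hQP (norm_nonneg _))
  have hx : ‖x‖ ^ 2 = ‖u‖ ^ 2 + ‖v‖ ^ 2 := by
    have huv : inner 𝕜 u (-v) = 0 := by
      rw [inner_neg_right, inner_eq_zero_symm.1 (inner_apply_one_sub_apply_eq_zero hQ x x),
        neg_zero]
    have hx : x = u - -v := by simp [u, v]
    rw [hx, norm_sub_sq_eq_norm_sq_add_norm_sq_of_inner_eq_zero huv, norm_neg]
  have hsplit : (P - Q) x = P u - (1 - P) v := by
    simp only [u, v, _root_.sub_apply, map_sub]; abel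
  refine (pow_le_pow_iff_left₀ (norm_nonneg _) (by positivity) two_ne_zero).1 ?_
  calc ‖(P - Q) x‖ ^ 2 = ‖P u‖ ^ 2 + ‖(1 - P) v‖ ^ 2 := by
        rw [hsplit, norm_sub_sq_eq_norm_sq_add_norm_sq_of_inner_eq_zero
          (inner_apply_one_sub_apply_eq_zero hP u v)]
    _ ≤ (c * ‖u‖) ^ 2 + (c * ‖v‖) ^ 2 := by gcongr
    _ = (c * ‖x‖) ^ 2 := by rw [mul_pow, mul_pow, mul_pow, hx]; ring

end ContinuousLinearMap

namespace Matrix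

theorem norm_sub_le_of_isStarProjection {𝕜 n : Type*} [RCLike 𝕜] [Fintype n] [DecidableEq n]
    {P Q : Matrix n n 𝕜} (hP : IsStarProjection P) (hQ : IsStarProjection Q) {c : ℝ}
    (hPQ : ‖(1 - Q) * P‖ ≤ c) (hQP : ‖(1 - P) * Q‖ ≤ c) :
    ‖P - Q‖ ≤ c := by
  rw [cstar_norm_def] at hPQ hQP ⊢
  simp only [map_sub, map_mul, map_one] at hPQ hQP ⊢
  exact ContinuousLinearMap.norm_sub_le_of_isStarProjection (hP.map toEuclideanCLM)
    (hQ.map toEuclideanCLM) hPQ hQP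

variable {m n : Type*} [Fintype m] [Fintype n] {B : Matrix m n ℝ}

lemma injective_mulVec_of_norm_le (hB : ∀ x : n → ℝ, ‖toLp 2 x‖ ≤ ‖toLp 2 (B *ᵥ x)‖) :
    Function.Injective B.mulVec := by
  intro x y hxy
  have h := hB (x - y)
  rw [mulVec_sub, hxy, sub_self, toLp_zero, norm_zero, norm_le_zero_iff, toLp_eq_zero] at h
  exact sub_eq_zero.1 h

variable [DecidableEq n]

/-- The Moore–Penrose pseudoinverse when `B` has full column rank; junk otherwise. -/
noncomputable def pinv (B : Matrix m n ℝ) : Matrix n m ℝ := (Bᵀ * B)⁻¹ * Bᵀ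

lemma isUnit_det_transpose_mul_self (hB : Function.Injective B.mulVec) :
    IsUnit (Bᵀ * B).det := by
  simpa only [conjTranspose_eq_transpose_of_trivial] using
    (PosDef.conjTranspose_mul_self B hB).det_pos.ne'.isUnit

lemma pinv_mul_self (hB : IsUnit (Bᵀ * B).det) : pinv B * B = 1 := by
  rw [pinv, Matrix.mul_assoc, nonsing_inv_mul _ hB]

lemma isStarProjection_mul_pinv (hB : IsUnit (Bᵀ * B).det) : IsStarProjection (B * pinv B) where
  isIdempotentElem := by
    rw [IsIdempotentElem, Matrix.mul_assoc, ← Matrix.mul_assoc (pinv B), pinv_mul_self hB,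
      Matrix.one_mul]
  isSelfAdjoint := by
    rw [IsSelfAdjoint, star_eq_conjTranspose, conjTranspose_eq_transpose_of_trivial, pinv,
      transpose_mul, transpose_mul, transpose_nonsing_inv, transpose_mul, transpose_transpose,
      Matrix.mul_assoc]

variable [DecidableEq m]

lemma norm_pinv_le_one (hB : ∀ x : n → ℝ, ‖toLp 2 x‖ ≤ ‖toLp 2 (B *ᵥ x)‖) : ‖pinv B‖ ≤ 1 := by
  have hP := isStarProjection_mul_pinv
    (isUnit_det_transpose_mul_self (injective_mulVec_of_norm_le hB))
  rw [l2_opNorm_def]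
  refine ContinuousLinearMap.opNorm_le_bound _ zero_le_one fun y => ?_
  change ‖toLp 2 (pinv B *ᵥ ofLp y)‖ ≤ 1 * ‖y‖
  calc ‖toLp 2 (pinv B *ᵥ ofLp y)‖ ≤ ‖toLp 2 (B *ᵥ pinv B *ᵥ ofLp y)‖ := hB _
    _ ≤ ‖B * pinv B‖ * ‖y‖ := by rw [mulVec_mulVec]; exact (B * pinv B).l2_opNorm_mulVec y
    _ ≤ 1 * ‖y‖ := by gcongr; exact hP.norm_le

lemma norm_one_sub_mul_pinv_mul_le (C : Matrix m n ℝ) (hC : IsUnit (Cᵀ * C).det) :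
    ‖(1 - C * pinv C) * (B * pinv B)‖ ≤ ‖B - C‖ * ‖pinv B‖ := by
  have hCC : (1 - C * pinv C) * C = 0 := by
    rw [Matrix.sub_mul, Matrix.one_mul, Matrix.mul_assoc, pinv_mul_self hC, Matrix.mul_one,
      sub_self]
  have h : (1 - C * pinv C) * (B * pinv B) = (1 - C * pinv C) * (B - C) * pinv B := by
    rw [Matrix.mul_sub, hCC, sub_zero, Matrix.mul_assoc]
  calc ‖(1 - C * pinv C) * (B * pinv B)‖ ≤ ‖1 - C * pinv C‖ * ‖B - C‖ * ‖pinv B‖ := by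
        rw [h]; exact (l2_opNorm_mul _ _).trans (by gcongr; exact l2_opNorm_mul _ _)
    _ ≤ ‖B - C‖ * ‖pinv B‖ := by
        grw [(isStarProjection_mul_pinv hC).one_sub.norm_le, one_mul]

lemma norm_mul_pinv_sub_mul_pinv_le {C : Matrix m n ℝ}
    (hB : ∀ x : n → ℝ, ‖toLp 2 x‖ ≤ ‖toLp 2 (B *ᵥ x)‖)
    (hC : ∀ x : n → ℝ, ‖toLp 2 x‖ ≤ ‖toLp 2 (C *ᵥ x)‖) :
    ‖B * pinv B - C * pinv C‖ ≤ ‖B - C‖ := by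
  have hB' := isUnit_det_transpose_mul_self (injective_mulVec_of_norm_le hB)
  have hC' := isUnit_det_transpose_mul_self (injective_mulVec_of_norm_le hC)
  refine norm_sub_le_of_isStarProjection (isStarProjection_mul_pinv hB')
    (isStarProjection_mul_pinv hC') ?_ ?_
  · calc _ ≤ ‖B - C‖ * ‖pinv B‖ := norm_one_sub_mul_pinv_mul_le C hC'
      _ ≤ ‖B - C‖ := mul_le_of_le_one_right (norm_nonneg _) (norm_pinv_le_one hB)
  · calc _ ≤ ‖C - B‖ * ‖pinv C‖ := norm_one_sub_mul_pinv_mul_le B hB'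
      _ ≤ ‖B - C‖ := by
        rw [norm_sub_rev]; exact mul_le_of_le_one_right (norm_nonneg _) (norm_pinv_le_one hC)

lemma norm_le_norm_fromRows_one_mulVec {k : Type*} [Fintype k] (A : Matrix k n ℝ) (x : n → ℝ) :
    ‖toLp 2 x‖ ≤ ‖toLp 2 (fromRows (1 : Matrix n n ℝ) A *ᵥ x)‖ := by
  refine (pow_le_pow_iff_left₀ (norm_nonneg _) (norm_nonneg _) two_ne_zero).1 ?_
  rw [EuclideanSpace.norm_sq_eq, EuclideanSpace.norm_sq_eq]
  simp [fromRows_mulVec, Fintype.sum_sum_type]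
  positivity

end Matrix

theorem stmt3_general (D d : ℕ)
    (A At : Matrix (Fin (D - d)) (Fin d) ℝ) (ε : ℝ)
    (B Bt : Matrix (Fin d ⊕ Fin (D - d)) (Fin d) ℝ)
    (hB : B = Matrix.fromRows (1 : Matrix (Fin d) (Fin d) ℝ) A)
    (hBt : Bt = Matrix.fromRows (1 : Matrix (Fin d) (Fin d) ℝ) At)
    (hE : ‖B - Bt‖ ≤ ε) :
    ‖B * ((Bᵀ * B)⁻¹ * Bᵀ) - Bt * ((Btᵀ * Bt)⁻¹ * Btᵀ)‖ ≤ ε := by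
  subst hB hBt
  exact (norm_mul_pinv_sub_mul_pinv_le (norm_le_norm_fromRows_one_mulVec A)
    (norm_le_norm_fromRows_one_mulVec At)).trans hE

/-- for block matrices `B = [I; A]`, `B̃ = [I; Ã]` with
`‖B − B̃‖ ≤ ε`, the orthogonal projections onto their column spaces satisfy
`‖B B⁺ − B̃ B̃⁺‖ ≤ ε`, where `B⁺ = (BᵀB)⁻¹Bᵀ`. -/
theorem stmt3 (D d : ℕ) (hd : 0 < d) (hdD : d < D)
    (A At : Matrix (Fin (D - d)) (Fin d) ℝ) (ε : ℝ)
    (B Bt : Matrix (Fin d ⊕ Fin (D - d)) (Fin d) ℝ)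
    (hB : B = Matrix.fromRows (1 : Matrix (Fin d) (Fin d) ℝ) A)
    (hBt : Bt = Matrix.fromRows (1 : Matrix (Fin d) (Fin d) ℝ) At)
    (hE : ‖B - Bt‖ ≤ ε) :
    ‖B * ((Bᵀ * B)⁻¹ * Bᵀ) - Bt * ((Btᵀ * Bt)⁻¹ * Btᵀ)‖ ≤ ε :=
  stmt3_general D d A At ε B Bt hB hBt hE
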